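/- Let α be a linear order, n : ℕ, and let X, X' : Fin n → α differ in at most β positions. Let p : ℕ with p < n, let e : α, and suppose X' i ≤ e for every index i with (i : ℕ) ≤ p. Let k, a : ℕ and suppose (k : ℤ) − a ≤ |{i : (i : ℕ) > p ∧ X' i ≤ e}| ≤ k + a. Then (p + 1 + k : ℤ) − a − β ≤ |{i : X i ≤ e}| ≤ (p + 1 + k) + a + β. (This is the induction step in the correctness proof of the randomized resilient selection algorithm: if the element e returned by the recursive call on the suffix X'[p+1, n] has rank within a of k there, and e dominates the whole prefix because e ≥ lb = x_p, then the rank of e in the original array X is within a + β of p + 1 + k, where β counts the corruptions of the current level.) -/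

import Mathlib

open Finset

theorem card_filter_le_card_filter_add_card_ne {ι α : Type*} [Fintype ι] [DecidableEq α]
    (P : α → Prop) [DecidablePred P] (f g : ι → α) :
    #{i | P (f i)} ≤ #{i | P (g i)} + #{i | f i ≠ g i} := by
  classical
  refine (card_le_card fun i hi => ?_).trans (card_union_le _ _)
  by_cases h : f i = g i <;> simp_all

theorem Fin.card_filter_val_le {n p : ℕ} (hp : p < n) : #{i : Fin n | (i : ℕ) ≤ p} = p + 1 := by
  simpa [Nat.lt_succ_iff, hp] using Fin.card_filter_val_lt (n := n) (m := p + 1)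

theorem Fin.card_filter_eq_add_card_filter_gt {n p : ℕ} (hp : p < n) (Q : Fin n → Prop)
    [DecidablePred Q] (hQ : ∀ i : Fin n, (i : ℕ) ≤ p → Q i) :
    #(univ.filter Q) = p + 1 + #(univ.filter fun i : Fin n => (i : ℕ) > p ∧ Q i) := by
  have hprefix : (univ.filter Q).filter (fun i : Fin n => (i : ℕ) ≤ p) =
      univ.filter (fun i : Fin n => (i : ℕ) ≤ p) := by
    ext i; simpa using hQ i
  have hsuffix : (univ.filter Q).filter (fun i : Fin n => ¬(i : ℕ) ≤ p) =
      univ.filter (fun i : Fin n => (i : ℕ) > p ∧ Q i) := by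
    ext i; simp [and_comm]
  rw [← card_filter_add_card_filter_not (s := univ.filter Q) (fun i : Fin n => (i : ℕ) ≤ p),
    hprefix, hsuffix, Fin.card_filter_val_le hp]

/-- Induction step of the correctness proof of the randomized resilient selection
algorithm: if `e` dominates the prefix `X'[0..p]` and its rank in the suffix of `X'`
is within `a` of `k`, then its rank in `X` (a `β`-corruption of `X'`) is within
`a + β` of `p + 1 + k`. -/
theorem randomized_select_rank_step {α : Type*} [LinearOrder α] {n : ℕ}
    (X X' : Fin n → α) (β : ℕ)
    (hdiff : (Finset.univ.filter fun i : Fin n => X i ≠ X' i).card ≤ β)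
    (p : ℕ) (hp : p < n) (e : α)
    (hprefix : ∀ i : Fin n, (i : ℕ) ≤ p → X' i ≤ e)
    (k a : ℕ)
    (hlow : (k : ℤ) - a ≤
      ((Finset.univ.filter fun i : Fin n => (i : ℕ) > p ∧ X' i ≤ e).card : ℤ))
    (hhigh : ((Finset.univ.filter fun i : Fin n => (i : ℕ) > p ∧ X' i ≤ e).card : ℤ) ≤
      (k : ℤ) + a) :
    (p + 1 + k : ℤ) - a - β ≤ ((Finset.univ.filter fun i : Fin n => X i ≤ e).card : ℤ) ∧
    ((Finset.univ.filter fun i : Fin n => X i ≤ e).card : ℤ) ≤ (p + 1 + k : ℤ) + a + β := by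
  have hsplit := Fin.card_filter_eq_add_card_filter_gt hp (fun i => X' i ≤ e) hprefix
  have hup := card_filter_le_card_filter_add_card_ne (· ≤ e) X X'
  have hdown := card_filter_le_card_filter_add_card_ne (· ≤ e) X' X
  simp only [ne_comm (a := X' _)] at hdown
  omega
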